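/- arXiv:2511.03052 — 5 statements merged into one kernel-verified Lean document; each statement's English description precedes it below -/
import Mathlib

section
/- Let H be a real symmetric block matrix H = [[A, B], [Bᵀ, -C]] with A ⪰ μI, C ⪰ μI, and ‖H‖ ≤ L (operator norm), where 0 ≤ μ ≤ L. Then every eigenvalue λ of H satisfies λ ∈ [-L, -μ] ∪ [μ, L]. -/
open Matrix

/-!
Write an eigenvector as `(x, y)`. Pairing the two block rows of `H v = λ v` with `x` and `y` and
subtracting cancels the coupling terms `x ⬝ B y = y ⬝ Bᵀ x`, leaving
`x ⬝ A x + y ⬝ C y = λ (|x|² - |y|²)`. The left side is at least `μ (|x|² + |y|²)` and the right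
side at most `|λ| (|x|² + |y|²)`, so `μ ≤ |λ|`; and `|λ| ≤ ‖H‖ ≤ L` holds for any eigenvalue.
-/

theorem ContinuousLinearMap.norm_le_opNorm_of_apply_eq_smul {𝕜 E : Type*}
    [NontriviallyNormedField 𝕜] [NormedAddCommGroup E] [NormedSpace 𝕜 E]
    (T : E →L[𝕜] E) {c : 𝕜} {x : E} (hx : x ≠ 0)
    (h : T x = c • x) : ‖c‖ ≤ ‖T‖ := by
  refine le_of_mul_le_mul_right ?_ (norm_pos_iff.mpr hx)
  calc ‖c‖ * ‖x‖ = ‖T x‖ := by rw [h, norm_smul]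
    _ ≤ ‖T‖ * ‖x‖ := T.le_opNorm x

theorem Matrix.norm_le_norm_toEuclideanCLM_of_mulVec_eq_smul {𝕜 ι : Type*} [RCLike 𝕜]
    [Fintype ι] [DecidableEq ι] {H : Matrix ι ι 𝕜} {c : 𝕜} {v : ι → 𝕜} (hv : v ≠ 0)
    (h : H *ᵥ v = c • v) : ‖c‖ ≤ ‖toEuclideanCLM (𝕜 := 𝕜) H‖ :=
  (toEuclideanCLM (𝕜 := 𝕜) H).norm_le_opNorm_of_apply_eq_smul (x := WithLp.toLp 2 v)
    (by simpa using hv) (by rw [toEuclideanCLM_toLp, h, WithLp.toLp_smul])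

theorem Matrix.PosSemidef.mul_dotProduct_self_le {ι : Type*} [Fintype ι] [DecidableEq ι]
    {A : Matrix ι ι ℝ} {μ : ℝ} (hA : (A - μ • 1).PosSemidef) (x : ι → ℝ) :
    μ * (x ⬝ᵥ x) ≤ x ⬝ᵥ A *ᵥ x := by
  have h := hA.dotProduct_mulVec_nonneg x
  simp only [star_trivial, sub_mulVec, smul_mulVec, one_mulVec, dotProduct_sub,
    dotProduct_smul, smul_eq_mul] at h
  linarith

def saddleMatrix {n m : Type*} (A : Matrix n n ℝ) (B : Matrix n m ℝ) (C : Matrix m m ℝ) :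
    Matrix (n ⊕ m) (n ⊕ m) ℝ :=
  fromBlocks A B Bᵀ (-C)

section
variable {n m : Type*} [Fintype n] [Fintype m]
  {A : Matrix n n ℝ} {B : Matrix n m ℝ} {C : Matrix m m ℝ} {x : n → ℝ} {y : m → ℝ} {lam : ℝ}

theorem saddleMatrix_quadForm_eq_of_mulVec_eq_smul
    (h : saddleMatrix A B C *ᵥ Sum.elim x y = lam • Sum.elim x y) :
    x ⬝ᵥ A *ᵥ x + y ⬝ᵥ C *ᵥ y = lam * (x ⬝ᵥ x - y ⬝ᵥ y) := by
  have hx : A *ᵥ x + B *ᵥ y = lam • x := funext fun i => by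
    simpa [saddleMatrix, fromBlocks_mulVec] using congrFun h (Sum.inl i)
  have hy : Bᵀ *ᵥ x + (-C) *ᵥ y = lam • y := funext fun i => by
    simpa [saddleMatrix, fromBlocks_mulVec] using congrFun h (Sum.inr i)
  have ex := congrArg (x ⬝ᵥ ·) hx
  have ey := congrArg (y ⬝ᵥ ·) hy
  simp only [dotProduct_add, dotProduct_smul, smul_eq_mul, neg_mulVec, dotProduct_neg] at ex ey
  have hcross : x ⬝ᵥ B *ᵥ y = y ⬝ᵥ Bᵀ *ᵥ x := by
    rw [mulVec_transpose, dotProduct_mulVec, dotProduct_comm]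
  linarith

theorem le_abs_of_saddleMatrix_mulVec_eq_smul [DecidableEq n] [DecidableEq m] {μ : ℝ}
    (hA : (A - μ • 1).PosSemidef) (hC : (C - μ • 1).PosSemidef) (hv : Sum.elim x y ≠ 0)
    (h : saddleMatrix A B C *ᵥ Sum.elim x y = lam • Sum.elim x y) : μ ≤ |lam| := by
  have hx : 0 ≤ x ⬝ᵥ x := by simpa using dotProduct_self_star_nonneg x
  have hy : 0 ≤ y ⬝ᵥ y := by simpa using dotProduct_self_star_nonneg y
  have hpos : 0 < x ⬝ᵥ x + y ⬝ᵥ y := (add_nonneg hx hy).lt_of_ne' <| by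
    rwa [← sumElim_dotProduct_sumElim, Ne, dotProduct_self_eq_zero]
  refine le_of_mul_le_mul_right ?_ hpos
  calc μ * (x ⬝ᵥ x + y ⬝ᵥ y) ≤ x ⬝ᵥ A *ᵥ x + y ⬝ᵥ C *ᵥ y := by
        linarith [hA.mul_dotProduct_self_le x, hC.mul_dotProduct_self_le y]
    _ = lam * (x ⬝ᵥ x - y ⬝ᵥ y) := saddleMatrix_quadForm_eq_of_mulVec_eq_smul h
    _ ≤ |lam| * |x ⬝ᵥ x - y ⬝ᵥ y| := by rw [← abs_mul]; exact le_abs_self _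
    _ ≤ |lam| * (x ⬝ᵥ x + y ⬝ᵥ y) := by
        gcongr
        exact abs_sub_le_iff.mpr ⟨by linarith, by linarith⟩
end

theorem mem_Icc_neg_union_Icc_of_le_abs_of_abs_le {α : Type*} [AddCommGroup α] [LinearOrder α]
    [IsOrderedAddMonoid α] {a b x : α} (ha : a ≤ |x|) (hb : |x| ≤ b) :
    x ∈ Set.Icc (-b) (-a) ∪ Set.Icc a b := by
  obtain ⟨hbx, hxb⟩ := abs_le.mp hb
  rcases le_abs'.mp ha with h | h
  · exact Or.inl ⟨hbx, h⟩
  · exact Or.inr ⟨h, hxb⟩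

theorem eigenvalues_of_saddle_hessian_general
    {n m : ℕ} (μ L : ℝ)
    (A : Matrix (Fin n) (Fin n) ℝ) (C : Matrix (Fin m) (Fin m) ℝ)
    (B : Matrix (Fin n) (Fin m) ℝ)
    (hAμ : (A - μ • (1 : Matrix (Fin n) (Fin n) ℝ)).PosSemidef)
    (hCμ : (C - μ • (1 : Matrix (Fin m) (Fin m) ℝ)).PosSemidef)
    (H : Matrix (Fin n ⊕ Fin m) (Fin n ⊕ Fin m) ℝ)
    (hH : H = Matrix.fromBlocks A B B.transpose (-C))
    (hnorm : ‖Matrix.toEuclideanCLM (𝕜 := ℝ) H‖ ≤ L)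
    (lam : ℝ) (v : (Fin n ⊕ Fin m) → ℝ) (hv : v ≠ 0)
    (heig : H.mulVec v = lam • v) :
    lam ∈ Set.Icc (-L) (-μ) ∪ Set.Icc μ L := by
  have habs_le : |lam| ≤ L := (norm_le_norm_toEuclideanCLM_of_mulVec_eq_smul hv heig).trans hnorm
  subst hH
  obtain ⟨x, y, rfl⟩ : ∃ x y, v = Sum.elim x y := ⟨_, _, (Sum.elim_comp_inl_inr v).symm⟩
  exact mem_Icc_neg_union_Icc_of_le_abs_of_abs_le
    (le_abs_of_saddleMatrix_mulVec_eq_smul hAμ hCμ hv heig) habs_le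

/-- Every eigenvalue of the symmetric block matrix `H = [[A, B], [B.transpose, -C]]` with
`A ⪰ μI`, `C ⪰ μI` and operator norm `‖H‖ ≤ L` lies in `[-L, -μ] ∪ [μ, L]`. -/
theorem eigenvalues_of_saddle_hessian
    {n m : ℕ} (μ L : ℝ) (hμ : 0 ≤ μ) (hμL : μ ≤ L)
    (A : Matrix (Fin n) (Fin n) ℝ) (C : Matrix (Fin m) (Fin m) ℝ)
    (B : Matrix (Fin n) (Fin m) ℝ)
    (hA : A.IsSymm) (hC : C.IsSymm)
    (hAμ : (A - μ • (1 : Matrix (Fin n) (Fin n) ℝ)).PosSemidef)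
    (hCμ : (C - μ • (1 : Matrix (Fin m) (Fin m) ℝ)).PosSemidef)
    (H : Matrix (Fin n ⊕ Fin m) (Fin n ⊕ Fin m) ℝ)
    (hH : H = Matrix.fromBlocks A B B.transpose (-C))
    (hnorm : ‖Matrix.toEuclideanCLM (𝕜 := ℝ) H‖ ≤ L)
    (lam : ℝ) (v : (Fin n ⊕ Fin m) → ℝ) (hv : v ≠ 0)
    (heig : H.mulVec v = lam • v) :
    lam ∈ Set.Icc (-L) (-μ) ∪ Set.Icc μ L :=
  eigenvalues_of_saddle_hessian_general μ L A C B hAμ hCμ H hH hnorm lam v hv heig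
end

section
/- Let H = [[A, B], [Bᵀ, -C]] with A ⪰ μI and C ⪰ μI for some μ > 0, and let r ∈ (-μ, μ). Then H - rI is invertible. (Consequently H has no eigenvalues in the open interval (-μ, μ).) -/
open Matrix
open scoped ComplexOrder

namespace Matrix

variable {l m 𝕜 : Type*} [DecidableEq l] [DecidableEq m]

theorem PosSemidef.posDef_sub_smul_one [Fintype m] {M : Matrix m m ℝ} {μ r : ℝ}
    (hM : (M - μ • (1 : Matrix m m ℝ)).PosSemidef) (hr : r < μ) :
    (M - r • (1 : Matrix m m ℝ)).PosDef := by
  have hsplit : M - r • (1 : Matrix m m ℝ) = (M - μ • 1) + (μ - r) • 1 := by module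
  rw [hsplit]
  exact PosDef.posSemidef_add hM (PosDef.one.smul (sub_pos.2 hr))

theorem fromBlocks_sub_smul_one [Ring 𝕜] (A : Matrix l l 𝕜) (B : Matrix l m 𝕜)
    (C : Matrix m l 𝕜) (D : Matrix m m 𝕜) (r : 𝕜) :
    fromBlocks A B C D - r • (1 : Matrix (l ⊕ m) (l ⊕ m) 𝕜)
      = fromBlocks (A - r • 1) B C (D - r • 1) := by
  rw [← fromBlocks_one, fromBlocks_smul, sub_eq_add_neg, fromBlocks_neg, fromBlocks_add]
  simp [sub_eq_add_neg]

/-- The Schur complement of `-D` is `A + B D⁻¹ Bᴴ`, a positive definite matrix. -/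
theorem isUnit_fromBlocks_neg_of_posDef [Fintype l] [Fintype m] [RCLike 𝕜]
    {A : Matrix l l 𝕜} {D : Matrix m m 𝕜} (hA : A.PosDef) (hD : D.PosDef) (B : Matrix l m 𝕜) :
    IsUnit (fromBlocks A B Bᴴ (-D)) := by
  have := hD.isUnit.invertible
  have := invertibleNeg D
  have hschur : A - B * ⅟(-D) * Bᴴ = A + B * D⁻¹ * Bᴴ := by
    rw [invOf_neg, invOf_eq_nonsing_inv, Matrix.mul_neg, Matrix.neg_mul, sub_neg_eq_add]
  rw [isUnit_fromBlocks_iff_of_invertible₂₂, hschur]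
  exact (hA.add_posSemidef (hD.inv.posSemidef.mul_mul_conjTranspose_same B)).isUnit

end Matrix

theorem saddle_hessian_shift_invertible_general
    {n m : ℕ} (μ : ℝ)
    (A : Matrix (Fin n) (Fin n) ℝ) (C : Matrix (Fin m) (Fin m) ℝ)
    (B : Matrix (Fin n) (Fin m) ℝ)
    (hAμ : (A - μ • (1 : Matrix (Fin n) (Fin n) ℝ)).PosSemidef)
    (hCμ : (C - μ • (1 : Matrix (Fin m) (Fin m) ℝ)).PosSemidef)
    (r : ℝ) (hr₁ : -μ < r) (hr₂ : r < μ) :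
    IsUnit (Matrix.fromBlocks A B B.transpose (-C)
      - r • (1 : Matrix (Fin n ⊕ Fin m) (Fin n ⊕ Fin m) ℝ)) := by
  have hA : (A - r • (1 : Matrix (Fin n) (Fin n) ℝ)).PosDef := hAμ.posDef_sub_smul_one hr₂
  have hC : (C - (-r) • (1 : Matrix (Fin m) (Fin m) ℝ)).PosDef :=
    hCμ.posDef_sub_smul_one (by linarith)
  have hshift_neg : -C - r • (1 : Matrix (Fin m) (Fin m) ℝ) = -(C - (-r) • 1) := by module
  rw [fromBlocks_sub_smul_one, hshift_neg, ← conjTranspose_eq_transpose_of_trivial]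
  exact isUnit_fromBlocks_neg_of_posDef hA hC B

/-- If `A ⪰ μI`, `C ⪰ μI` with `μ > 0` and `r ∈ (-μ, μ)`, then
`H - rI` is invertible, where `H = [[A, B], [Bᵀ, -C]]`. -/
theorem saddle_hessian_shift_invertible
    {n m : ℕ} (μ : ℝ) (hμ : 0 < μ)
    (A : Matrix (Fin n) (Fin n) ℝ) (C : Matrix (Fin m) (Fin m) ℝ)
    (B : Matrix (Fin n) (Fin m) ℝ)
    (hA : A.IsSymm) (hC : C.IsSymm)
    (hAμ : (A - μ • (1 : Matrix (Fin n) (Fin n) ℝ)).PosSemidef)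
    (hCμ : (C - μ • (1 : Matrix (Fin m) (Fin m) ℝ)).PosSemidef)
    (r : ℝ) (hr₁ : -μ < r) (hr₂ : r < μ) :
    IsUnit (Matrix.fromBlocks A B B.transpose (-C)
      - r • (1 : Matrix (Fin n ⊕ Fin m) (Fin n ⊕ Fin m) ℝ)) :=
  saddle_hessian_shift_invertible_general μ A C B hAμ hCμ r hr₁ hr₂
end

section
/- Let ν be a probability measure supported on a finite set S ⊂ ℂ, invariant under conjugation, and suppose R ≤ min_{p ∈ P_T} E_{λ∼ν}|p(λ)|². Then there exist a real matrix M (of the block form with spectrum S, eigenvalue multiplicities weighted to realize ν), vectors z_0, z*, such that for every polynomial p of degree at most T with p(0)=1, ‖p(M)(z_0 - z*)‖² = E_{λ∼ν}|p(λ)|² ≥ R, while ‖z_0 - z*‖ = 1. -/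
/-!
Each `λ ∈ S` becomes a real `2 × 2` rotation-scaling block, whose complexification has
eigenvectors `(1, i)` and `(1, -i)` with eigenvalues `λ` and `conj λ`. The first basis vector of
the block is the average of these two, so `p(block)` sends `√ν(λ) • e₁` to a vector of squared
norm `ν(λ) (|p(λ)|² + |p(conj λ)|²) / 2`. Summing over the blocks and using that `S` and `ν` are
invariant under conjugation gives `E_ν |p|²`.
-/

open Polynomial

namespace Matrix

theorem aeval_mulVec_of_mulVec_eq_smul {n R : Type*} [Fintype n] [DecidableEq n] [CommRing R]
    {A : Matrix n n R} {μ : R} {x : n → R} (h : A *ᵥ x = μ • x) (p : R[X]) :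
    aeval A p *ᵥ x = p.eval μ • x := by
  have := Module.End.aeval_apply_of_mem_apply_eq_smul (f := toLinAlgEquiv' A) (p := p) h
  rwa [aeval_algHom_apply] at this

theorem aeval_blockDiagonal {m o R : Type*} [Fintype m] [Fintype o] [DecidableEq m] [DecidableEq o]
    [CommRing R] (A : o → Matrix m m R) (p : R[X]) :
    aeval (blockDiagonal A) p = blockDiagonal fun k => aeval (A k) p := by
  induction p using Polynomial.induction_on' with
  | add p q hp hq => simp only [map_add, hp, hq, ← blockDiagonal_add]; rfl
  | monomial k a =>
    simp only [aeval_monomial, ← Algebra.smul_def, ← blockDiagonal_pow, ← blockDiagonal_smul]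
    rfl

theorem blockDiagonal_mulVec_apply {m o R : Type*} [Fintype m] [Fintype o] [DecidableEq o]
    [NonUnitalNonAssocSemiring R] (A : o → Matrix m m R) (u : m × o → R) (i : m) (k : o) :
    (blockDiagonal A *ᵥ u) (i, k) = (A k *ᵥ fun j => u (j, k)) i := by
  simp only [mulVec, dotProduct, Fintype.sum_prod_type, blockDiagonal_apply']
  rw [Finset.sum_comm, Finset.sum_eq_single k (fun k' _ hk' => by simp [Ne.symm hk']) (by simp)]
  simp

end Matrix

open Matrix

theorem Finset.sum_comp_star_of_star_mem {α β : Type*} [InvolutiveStar α] [AddCommMonoid β]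
    {S : Finset α} (hS : ∀ z ∈ S, star z ∈ S) (f : α → β) :
    ∑ z ∈ S, f (star z) = ∑ z ∈ S, f z :=
  Finset.sum_nbij' star star hS hS (fun z _ => star_star z) (fun z _ => star_star z)
    (fun _ _ => rfl)

noncomputable def polyErrorNormSq {ι : Type*} [Fintype ι] [DecidableEq ι]
    (M : Matrix ι ι ℝ) (v : ι → ℝ) (p : ℂ[X]) : ℝ :=
  ∑ i, ‖(aeval (M.map Complex.ofReal) p *ᵥ fun i => (v i : ℂ)) i‖ ^ 2

section polyErrorNormSq

variable {ι κ : Type*} [Fintype ι] [DecidableEq ι] [Fintype κ] [DecidableEq κ]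

theorem polyErrorNormSq_reindex (e : ι ≃ κ) (M : Matrix ι ι ℝ) (v : ι → ℝ) (p : ℂ[X]) :
    polyErrorNormSq (reindex e e M) (v ∘ e.symm) p = polyErrorNormSq M v p := by
  have haeval : aeval ((reindex e e M).map Complex.ofReal) p
      = reindexAlgEquiv ℂ ℂ e (aeval (M.map Complex.ofReal) p) := by
    rw [← aeval_algHom_apply]; rfl
  have hv : (fun i => ((v ∘ e.symm) i : ℂ)) ∘ e.symm.symm = fun i => (v i : ℂ) := by
    funext i; simp
  unfold polyErrorNormSq
  rw [haeval, coe_reindexAlgEquiv, reindex_apply, submatrix_mulVec_equiv, hv]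
  exact e.symm.sum_comp (fun i => ‖(aeval (M.map Complex.ofReal) p *ᵥ fun i => (v i : ℂ)) i‖ ^ 2)

theorem polyErrorNormSq_blockDiagonal {m : Type*} [Fintype m] [DecidableEq m]
    (B : κ → Matrix m m ℝ) (v : m × κ → ℝ) (p : ℂ[X]) :
    polyErrorNormSq (blockDiagonal B) v p = ∑ k, polyErrorNormSq (B k) (fun i => v (i, k)) p := by
  unfold polyErrorNormSq
  rw [blockDiagonal_map _ _ Complex.ofReal_zero, aeval_blockDiagonal, Fintype.sum_prod_type,
    Finset.sum_comm]
  simp only [blockDiagonal_mulVec_apply]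

end polyErrorNormSq

open ComplexConjugate

def rotScale (z : ℂ) : Matrix (Fin 2) (Fin 2) ℝ := !![z.re, z.im; -z.im, z.re]

theorem rotScale_map_mulVec_I (z : ℂ) :
    (rotScale z).map Complex.ofReal *ᵥ ![1, Complex.I] = z • ![1, Complex.I] := by
  ext i
  fin_cases i <;> simp [rotScale, mulVec, dotProduct, Fin.sum_univ_two, Complex.ext_iff]

theorem rotScale_map_mulVec_neg_I (z : ℂ) :
    (rotScale z).map Complex.ofReal *ᵥ ![1, -Complex.I] = conj z • ![1, -Complex.I] := by
  ext i
  fin_cases i <;> simp [rotScale, mulVec, dotProduct, Fin.sum_univ_two, Complex.ext_iff]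

theorem polyErrorNormSq_rotScale (z : ℂ) (c : ℝ) (p : ℂ[X]) :
    polyErrorNormSq (rotScale z) ![c, 0] p
      = c ^ 2 / 2 * (‖p.eval z‖ ^ 2 + ‖p.eval (conj z)‖ ^ 2) := by
  have hv : (fun i => ((![c, 0] : Fin 2 → ℝ) i : ℂ))
      = ((c / 2 : ℝ) : ℂ) • (![1, Complex.I] + ![1, -Complex.I]) := by
    ext i
    fin_cases i
    · simp; ring
    · simp
  have hpar := parallelogram_law_with_norm ℝ (p.eval z) (p.eval (conj z))
  unfold polyErrorNormSq
  rw [hv, mulVec_smul, mulVec_add, aeval_mulVec_of_mulVec_eq_smul (rotScale_map_mulVec_I z),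
    aeval_mulVec_of_mulVec_eq_smul (rotScale_map_mulVec_neg_I z), Fin.sum_univ_two]
  simp only [Pi.smul_apply, Pi.add_apply, smul_eq_mul, Matrix.cons_val_zero, Matrix.cons_val_one,
    Matrix.cons_val_fin_one, mul_one, mul_neg, ← mul_add, ← sub_eq_add_neg, ← sub_mul, norm_mul,
    Complex.norm_I, Complex.norm_real, Real.norm_eq_abs, mul_pow, sq_abs]
  linear_combination (c / 2) ^ 2 * hpar

noncomputable def hardInstanceMatrix (S : Finset ℂ) : Matrix (Fin 2 × S) (Fin 2 × S) ℝ :=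
  blockDiagonal fun z => rotScale z

noncomputable def hardInstanceVector (S : Finset ℂ) (w : ℂ → ℝ) : Fin 2 × S → ℝ :=
  fun x => ![√(w x.2), 0] x.1

section hardInstance

variable {S : Finset ℂ} {w : ℂ → ℝ}

theorem sum_hardInstanceVector_sq (hw0 : ∀ z, 0 ≤ w z) :
    ∑ x, hardInstanceVector S w x ^ 2 = ∑ z ∈ S, w z := by
  simpa [hardInstanceVector, Fintype.sum_prod_type, Real.sq_sqrt (hw0 _)] using S.sum_attach w

theorem polyErrorNormSq_hardInstance (hw0 : ∀ z, 0 ≤ w z) (hSconj : ∀ z ∈ S, conj z ∈ S)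
    (hwconj : ∀ z, w (conj z) = w z) (p : ℂ[X]) :
    polyErrorNormSq (hardInstanceMatrix S) (hardInstanceVector S w) p
      = ∑ z ∈ S, w z * ‖p.eval z‖ ^ 2 := by
  have hconj : ∑ z ∈ S, w z * ‖p.eval (conj z)‖ ^ 2 = ∑ z ∈ S, w z * ‖p.eval z‖ ^ 2 := by
    simpa [hwconj] using Finset.sum_comp_star_of_star_mem hSconj fun z => w z * ‖p.eval z‖ ^ 2
  rw [hardInstanceMatrix, polyErrorNormSq_blockDiagonal]
  simp only [hardInstanceVector, polyErrorNormSq_rotScale, Real.sq_sqrt (hw0 _)]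
  rw [Finset.sum_coe_sort S fun z => w z / 2 * (‖p.eval z‖ ^ 2 + ‖p.eval (conj z)‖ ^ 2)]
  calc ∑ z ∈ S, w z / 2 * (‖p.eval z‖ ^ 2 + ‖p.eval (conj z)‖ ^ 2)
      = (∑ z ∈ S, w z * ‖p.eval z‖ ^ 2 + ∑ z ∈ S, w z * ‖p.eval (conj z)‖ ^ 2) / 2 := by
        rw [← Finset.sum_add_distrib, Finset.sum_div]
        exact Finset.sum_congr rfl fun z _ => by ring
    _ = ∑ z ∈ S, w z * ‖p.eval z‖ ^ 2 := by rw [hconj]; ring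

end hardInstance

/-- Hard instance construction from a conjugation-invariant finitely supported measure:
if `R ≤ min_{p ∈ P_T} E_{λ∼ν}|p(λ)|²`, then there is a real matrix `M` and vectors
`z₀, z*` with `‖z₀ - z*‖ = 1` such that `‖p(M)(z₀ - z*)‖² = E_{λ∼ν}|p(λ)|² ≥ R`
for every polynomial `p` of degree ≤ T with `p(0) = 1`. -/
theorem hard_instance_from_measure
    (T : ℕ) (R : ℝ) (S : Finset ℂ) (w : ℂ → ℝ)
    (hw0 : ∀ z, 0 ≤ w z) (hw1 : ∑ z ∈ S, w z = 1)
    (hSconj : ∀ z ∈ S, (starRingEnd ℂ) z ∈ S)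
    (hwconj : ∀ z, w ((starRingEnd ℂ) z) = w z)
    (hR : ∀ p : Polynomial ℂ, p.natDegree ≤ T → p.eval 0 = 1 →
      R ≤ ∑ z ∈ S, w z * ‖p.eval z‖ ^ 2) :
    ∃ (n : ℕ) (M : Matrix (Fin n) (Fin n) ℝ) (z₀ zstar : Fin n → ℝ),
      (∑ i, (z₀ i - zstar i) ^ 2 = 1) ∧
      ∀ p : Polynomial ℂ, p.natDegree ≤ T → p.eval 0 = 1 →
        (∑ i, ‖
            ((Polynomial.aeval (M.map Complex.ofReal) p).mulVec
              (fun i => ((z₀ i - zstar i : ℝ) : ℂ))) i‖ ^ 2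
          = ∑ z ∈ S, w z * ‖p.eval z‖ ^ 2) ∧
        R ≤ ∑ i, ‖
            ((Polynomial.aeval (M.map Complex.ofReal) p).mulVec
              (fun i => ((z₀ i - zstar i : ℝ) : ℂ))) i‖ ^ 2 := by
  let e := Fintype.equivFin (Fin 2 × S)
  refine ⟨_, reindex e e (hardInstanceMatrix S), hardInstanceVector S w ∘ e.symm, 0, ?_,
    fun p hdeg hp0 => ?_⟩
  · simpa [← hw1, e.symm.sum_comp (fun x => hardInstanceVector S w x ^ 2)]
      using sum_hardInstanceVector_sq hw0
  · have hp : polyErrorNormSq (reindex e e (hardInstanceMatrix S))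
        (hardInstanceVector S w ∘ e.symm) p = ∑ z ∈ S, w z * ‖p.eval z‖ ^ 2 := by
      rw [polyErrorNormSq_reindex, polyErrorNormSq_hardInstance hw0 hSconj hwconj]
    simp only [Pi.zero_apply, sub_zero]
    change polyErrorNormSq _ _ p = _ ∧ R ≤ polyErrorNormSq _ _ p
    exact ⟨hp, hp ▸ hR p hdeg hp0⟩
end

section
/- Let K ⊂ ℂ be compact with simply connected complement in the Riemann sphere, g_K its Green's function with pole at infinity, and λ ∈ ℂ \ K. Then for every polynomial p of degree at most T, |p(λ)| ≤ e^{T·g_K(λ)} · sup_{z∈K}|p(z)| (Bernstein–Walsh inequality). Consequently min over p of degree ≤ T with p(0)=1 of sup_{z∈K}|p(z)| ≥ e^{-T·g_K(0)} whenever 0 ∉ K. -/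
open Polynomial Filter Metric Set Asymptotics Bornology Topology

/-!
Fix `M > sup_K |p|`. For each `n` the function `p^n / Φ^(nT+1)` is holomorphic off `K`, bounded by
`M^n` on a neighbourhood of `K` (where `|p| < M` and `|Φ| > 1`), and tends to `0` at `∞` because
`Φ(z) ~ c z` and `deg p ≤ T`. The maximum modulus principle on the region between a thin
neighbourhood of `K` and a large circle gives `|p(λ)|^n ≤ M^n |Φ(λ)|^(nT+1)`; taking `n`-th roots
and letting `n → ∞`, then `M ↓ sup_K |p|`, yields `|p(λ)| ≤ |Φ(λ)|^T sup_K |p|`. The extra factor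
`Φ` is needed because `p / Φ^T` itself is merely bounded at `∞`, possibly by more than `M`.
-/

theorem le_of_forall_pow_le_mul_pow {a b r : ℝ} (hb : 0 < b) (h : ∀ n : ℕ, a ^ n ≤ b ^ n * r) :
    a ≤ b := by
  by_contra! hba
  obtain ⟨n, hn⟩ := pow_unbounded_of_one_lt r ((one_lt_div hb).mpr hba)
  rw [div_pow, lt_div_iff₀ (pow_pos hb n)] at hn
  linarith [h n]

theorem Polynomial.isBigO_cobounded_pow_of_natDegree_le {𝕜 : Type*} [NormedField 𝕜] {p : 𝕜[X]}
    {T : ℕ} (hdeg : p.natDegree ≤ T) : (fun z => p.eval z) =O[cobounded 𝕜] (· ^ T) := by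
  simpa using isBigO_cobounded_of_degree_le (Q := X ^ T)
    ((degree_le_of_natDegree_le hdeg).trans_eq (degree_X_pow T).symm)

theorem Polynomial.tendsto_eval_pow_div_pow_succ_cobounded {𝕜 : Type*} [NormedField 𝕜]
    {p : 𝕜[X]} {T : ℕ} (hdeg : p.natDegree ≤ T) {Φ : 𝕜 → 𝕜} {c : 𝕜} (hc : c ≠ 0)
    (hΦ : Tendsto (fun z => Φ z / z) (cobounded 𝕜) (𝓝 c)) (n : ℕ) :
    Tendsto (fun z => p.eval z ^ n / Φ z ^ (n * T + 1)) (cobounded 𝕜) (𝓝 0) := by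
  have hp : (fun z => (p.eval z / z ^ T) ^ n) =O[cobounded 𝕜] (fun _ => (1 : 𝕜)) := by
    simpa using ((isBigO_one_iff 𝕜).mpr
      (div_isBoundedUnder_of_isBigO (isBigO_cobounded_pow_of_natDegree_le hdeg))).pow n
  have hz : (fun z => (z / Φ z) ^ (n * T + 1)) =O[cobounded 𝕜] (fun _ => (1 : 𝕜)) := by
    refine Tendsto.isBigO_one 𝕜 (c := c⁻¹ ^ (n * T + 1)) ((hΦ.inv₀ hc).pow _ |>.congr fun z => ?_)
    rw [inv_div]
  have hz0 : ∀ᶠ z in cobounded 𝕜, z ≠ 0 := by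
    filter_upwards [eventually_cobounded_le_norm 1] with z hz
    exact norm_pos_iff.mp (one_pos.trans_le hz)
  refine ((hp.mul hz).mul (isBigO_refl (·⁻¹) _)).trans_tendsto ?_ |>.congr' ?_
  · simpa using tendsto_inv₀_cobounded
  · filter_upwards [hz0] with z hz
    rw [div_pow, div_pow, ← pow_mul, mul_comm T n]
    field_simp
    ring

theorem Complex.norm_le_of_eventually_nhdsSet_of_eventually_cocompact {E : Type*}
    [NormedAddCommGroup E] [NormedSpace ℂ E] {K : Set ℂ} {f : ℂ → E} {B : ℝ} (hK : IsCompact K)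
    (hf : DifferentiableOn ℂ f Kᶜ) (hnear : ∀ᶠ z in 𝓝ˢ K, z ∉ K → ‖f z‖ ≤ B)
    (hfar : ∀ᶠ z in cocompact ℂ, ‖f z‖ ≤ B) {z₀ : ℂ} (hz₀ : z₀ ∉ K) : ‖f z₀‖ ≤ B := by
  obtain ⟨V, hVo, hKV, hVB⟩ := mem_nhdsSet_iff_exists.mp hnear
  obtain ⟨δ, hδ, hδV⟩ := hK.exists_cthickening_subset_open (hVo.inter isOpen_compl_singleton)
    (subset_inter hKV (subset_compl_singleton_iff.mpr hz₀))
  obtain ⟨R, hR⟩ : ∃ R, ∀ z : ℂ, R ≤ ‖z‖ → ‖f z‖ ≤ B := by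
    rw [← cobounded_eq_cocompact] at hfar
    simpa using (hasBasis_cobounded_norm.eventually_iff).mp hfar
  set U := (cthickening δ K)ᶜ ∩ ball 0 (max R ‖z₀‖ + 1)
  have hUK : closure U ⊆ Kᶜ := calc
    closure U ⊆ closure (cthickening δ K)ᶜ := closure_mono inter_subset_left
    _ = (interior (cthickening δ K))ᶜ := closure_compl
    _ ⊆ (thickening δ K)ᶜ := compl_subset_compl.mpr
      (isOpen_thickening.subset_interior_iff.mpr (thickening_subset_cthickening δ K))
    _ ⊆ Kᶜ := compl_subset_compl.mpr (self_subset_thickening hδ K)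
  refine Complex.norm_le_of_forall_mem_frontier_norm_le (isBounded_ball.subset inter_subset_right)
    (hf.mono hUK).diffContOnCl (fun z hz => ?_) (subset_closure ⟨fun h => (hδV h).2 rfl, ?_⟩)
  · rcases frontier_inter_subset _ _ hz with ⟨hzδ, -⟩ | ⟨-, hzR⟩
    · rw [frontier_compl] at hzδ
      refine hVB (hδV (frontier_subset_closure.trans isClosed_cthickening.closure_subset hzδ)).1
        fun hzK => ?_
      have := frontier_cthickening_subset K hzδ
      rw [mem_ofPred_eq, infEDist_zero_of_mem hzK] at this
      exact (ENNReal.ofReal_pos.mpr hδ).ne this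
    · rw [frontier_ball _ (by positivity), mem_sphere_zero_iff_norm] at hzR
      exact hR z (by rw [hzR]; linarith [le_max_left R ‖z₀‖])
  · rw [mem_ball_zero_iff]
    linarith [le_max_right R ‖z₀‖]

section BernsteinWalsh

variable {K : Set ℂ} {Φ : ℂ → ℂ} {c : ℂ} {p : ℂ[X]} {T : ℕ}

theorem norm_eval_le_norm_pow_mul (hK : IsCompact K) (hΦdiff : DifferentiableOn ℂ Φ Kᶜ)
    (hΦ : MapsTo Φ Kᶜ {w | 1 < ‖w‖}) (hc : c ≠ 0)
    (hΦc : Tendsto (fun z => Φ z / z) (cocompact ℂ) (𝓝 c)) (hdeg : p.natDegree ≤ T) {M : ℝ}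
    (hM0 : 0 < M) (hM : ∀ z ∈ K, ‖p.eval z‖ < M) {z : ℂ} (hz : z ∉ K) :
    ‖p.eval z‖ ≤ ‖Φ z‖ ^ T * M := by
  have hΦ1 : ∀ w ∉ K, 1 < ‖Φ w‖ := fun w hw => hΦ hw
  have hΦz : 0 < ‖Φ z‖ := one_pos.trans (hΦ1 z hz)
  refine le_of_forall_pow_le_mul_pow (r := ‖Φ z‖) (by positivity) fun n => ?_
  have hf : DifferentiableOn ℂ (fun w => p.eval w ^ n / Φ w ^ (n * T + 1)) Kᶜ :=
    (p.differentiable.differentiableOn.pow n).div (hΦdiff.pow _) fun w hw =>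
      pow_ne_zero _ (norm_pos_iff.mp (one_pos.trans (hΦ1 w hw)))
  have hnear : ∀ᶠ w in 𝓝ˢ K, w ∉ K → ‖p.eval w ^ n / Φ w ^ (n * T + 1)‖ ≤ M ^ n := by
    filter_upwards [(isOpen_lt (continuous_norm.comp p.continuous) continuous_const).mem_nhdsSet.mpr
      hM] with w hwM hwK
    rw [norm_div, norm_pow, norm_pow]
    exact (div_le_self (by positivity) (one_le_pow₀ (hΦ1 w hwK).le)).trans
      (pow_le_pow_left₀ (norm_nonneg _) hwM.le n)
  have hfar : ∀ᶠ w in cocompact ℂ, ‖p.eval w ^ n / Φ w ^ (n * T + 1)‖ ≤ M ^ n := by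
    rw [← cobounded_eq_cocompact] at hΦc ⊢
    exact ((tendsto_eval_pow_div_pow_succ_cobounded hdeg hc hΦc n).norm.eventually
      (ge_mem_nhds (by simpa using pow_pos hM0 n)))
  have hzn := Complex.norm_le_of_eventually_nhdsSet_of_eventually_cocompact hK hf hnear hfar hz
  rw [norm_div, norm_pow, norm_pow, div_le_iff₀ (pow_pos hΦz _)] at hzn
  calc ‖p.eval z‖ ^ n ≤ M ^ n * ‖Φ z‖ ^ (n * T + 1) := hzn
    _ = (‖Φ z‖ ^ T * M) ^ n * ‖Φ z‖ := by ring

theorem norm_eval_le_norm_pow_mul_sSup (hK : IsCompact K) (hΦdiff : DifferentiableOn ℂ Φ Kᶜ)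
    (hΦ : MapsTo Φ Kᶜ {w | 1 < ‖w‖}) (hc : c ≠ 0)
    (hΦc : Tendsto (fun z => Φ z / z) (cocompact ℂ) (𝓝 c)) (hdeg : p.natDegree ≤ T) {z : ℂ}
    (hz : z ∉ K) : ‖p.eval z‖ ≤ ‖Φ z‖ ^ T * sSup ((fun w => ‖p.eval w‖) '' K) := by
  set S := sSup ((fun w => ‖p.eval w‖) '' K)
  have hS : ∀ w ∈ K, ‖p.eval w‖ ≤ S := fun w hw =>
    le_csSup (hK.image (continuous_norm.comp p.continuous)).bddAbove (mem_image_of_mem _ hw)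
  have hS0 : 0 ≤ S := Real.sSup_nonneg (by rintro _ ⟨w, -, rfl⟩; positivity)
  have hΦz : 0 < ‖Φ z‖ ^ T := pow_pos (one_pos.trans (hΦ hz)) T
  rw [← div_le_iff₀' hΦz]
  refine le_of_forall_gt_imp_ge_of_dense fun M hM => (div_le_iff₀' hΦz).mpr ?_
  exact norm_eval_le_norm_pow_mul hK hΦdiff hΦ hc hΦc hdeg (hS0.trans_lt hM)
    (fun w hw => (hS w hw).trans_lt hM) hz

end BernsteinWalsh

theorem bernstein_walsh_general
    (K : Set ℂ) (hK : IsCompact K)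
    (Φ : ℂ → ℂ)
    (hΦdiff : DifferentiableOn ℂ Φ Kᶜ)
    (hΦbij : Set.BijOn Φ Kᶜ {w : ℂ | 1 < ‖w‖})
    (hPhiDerivInf : ∃ c : ℝ, 0 < c ∧ Tendsto (fun z => Φ z / z) (cocompact ℂ) (nhds (c : ℂ)))
    (T : ℕ) (p : Polynomial ℂ) (hdeg : p.natDegree ≤ T) :
    (∀ lam ∉ K, ‖p.eval lam‖ ≤
      Real.exp (T * Real.log (‖Φ lam‖)) *
        sSup ((fun z => ‖p.eval z‖) '' K)) ∧
    (0 ∉ K → p.eval 0 = 1 →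
      Real.exp (-(T * Real.log (‖Φ 0‖))) ≤
        sSup ((fun z => ‖p.eval z‖) '' K)) := by
  obtain ⟨c, hc, hΦc⟩ := hPhiDerivInf
  have hΦpos : ∀ lam ∉ K, 0 < ‖Φ lam‖ := fun lam hlam => one_pos.trans (hΦbij.mapsTo hlam)
  have hexp : ∀ lam ∉ K, Real.exp (T * Real.log ‖Φ lam‖) = ‖Φ lam‖ ^ T := fun lam hlam => by
    rw [Real.exp_nat_mul, Real.exp_log (hΦpos lam hlam)]
  have hbound : ∀ lam ∉ K, ‖p.eval lam‖ ≤ ‖Φ lam‖ ^ T * sSup ((fun z => ‖p.eval z‖) '' K) :=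
    fun lam => norm_eval_le_norm_pow_mul_sSup hK hΦdiff hΦbij.mapsTo
      (Complex.ofReal_ne_zero.mpr hc.ne') hΦc hdeg
  refine ⟨fun lam hlam => hexp lam hlam ▸ hbound lam hlam, fun h0K hp0 => ?_⟩
  rw [Real.exp_neg, hexp 0 h0K, inv_le_iff_one_le_mul₀' (pow_pos (hΦpos 0 h0K) T)]
  simpa [hp0] using hbound 0 h0K

/-- Bernstein–Walsh inequality. Let `K ⊂ ℂ` be a nonempty compact set and let `Φ` be the
conformal map of the complement of `K` onto the exterior of the unit disc with `Φ(∞) = ∞`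
and `Φ'(∞) > 0`, so that `g_K = log |Φ|` is the Green's function of `K` with pole at `∞`.
Then `|p(λ)| ≤ exp(T · g_K(λ)) · sup_{z ∈ K} |p(z)|` for every polynomial `p` of degree ≤ T
and every `λ ∉ K`; consequently, if `0 ∉ K`, every such `p` with `p(0) = 1` satisfies
`sup_{z ∈ K} |p(z)| ≥ exp(-T · g_K(0))`. -/
theorem bernstein_walsh
    (K : Set ℂ) (hK : IsCompact K) (hKne : K.Nonempty)
    (Φ : ℂ → ℂ)
    (hΦdiff : DifferentiableOn ℂ Φ Kᶜ)
    (hΦbij : Set.BijOn Φ Kᶜ {w : ℂ | 1 < ‖w‖})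
    (hPhiInf : Tendsto Φ (cocompact ℂ) (cocompact ℂ))
    (hPhiDerivInf : ∃ c : ℝ, 0 < c ∧ Tendsto (fun z => Φ z / z) (cocompact ℂ) (nhds (c : ℂ)))
    (T : ℕ) (p : Polynomial ℂ) (hdeg : p.natDegree ≤ T) :
    (∀ lam ∉ K, ‖p.eval lam‖ ≤
      Real.exp (T * Real.log (‖Φ lam‖)) *
        sSup ((fun z => ‖p.eval z‖) '' K)) ∧
    (0 ∉ K → p.eval 0 = 1 →
      Real.exp (-(T * Real.log (‖Φ 0‖))) ≤
        sSup ((fun z => ‖p.eval z‖) '' K)) :=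
  bernstein_walsh_general K hK Φ hΦdiff hΦbij hPhiDerivInf T p hdeg
end

section
/- Let Φ_Ω be the conformal map of the exterior of the unit half-disc Ω = {z : |z| ≤ 1, Re z ≥ 0} onto the exterior of the unit disc given by Φ_Ω(λ) = [(1 - w) - √3·i·(1 + w)] / [2(w - 1)] where w = ((λ-i)/(λ+i))^{2/3}. Then |Φ_Ω(0)| = 1 and |Φ_Ω'(0)|/|Φ_Ω(0)| = 4/(3√3); hence the normal derivative of the Green's function g_Ω = log|Φ_Ω| at 0 equals 4/(3√3). -/
open Complex

/-!
With `m(λ) = (i - λ)/(i + λ)` we have `m(0) = 1`, `m'(0) = 2i`, and `m² = ((λ - i)/(λ + i))²`,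
so `w = ω m^{2/3}`, with `ω` a primitive cube root of unity, is a cube root of
`((λ - i)/(λ + i))²` holomorphic near `0` with `w(0) = ω` and `|w'(0)| = 4/3`. The outer Möbius map
`M(w) = [(1 - w) - √3 i (1 + w)] / (2(w - 1))` sends `ω` to `-1` and has derivative
`√3 i / (w - 1)²`, of modulus `√3 / |ω - 1|² = 1/√3` at `ω`; the chain rule gives `4/(3√3)`.
-/

noncomputable section

namespace HalfDisc

theorem cpow_div_pow (z : ℂ) (n : ℕ) {k : ℕ} (hk : k ≠ 0) : (z ^ ((n : ℂ) / k)) ^ k = z ^ n := by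
  rw [← cpow_nat_mul, mul_div_cancel₀ _ (Nat.cast_ne_zero.mpr hk), cpow_natCast]

def omega : ℂ := (-1 + Real.sqrt 3 * I) / 2

theorem sqrt_three_sq : (Real.sqrt 3 : ℂ) ^ 2 = 3 := by
  exact_mod_cast Real.sq_sqrt (by norm_num : (0 : ℝ) ≤ 3)

theorem omega_pow_three : omega ^ 3 = 1 := by
  have h3 : (Real.sqrt 3 : ℂ) ^ 3 = 3 * Real.sqrt 3 := by rw [pow_succ, sqrt_three_sq]
  rw [omega]
  ring_nf
  rw [h3, sqrt_three_sq, I_sq, I_pow_three]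
  ring

theorem norm_omega : ‖omega‖ = 1 := by
  rw [omega, norm_div, show (-1 + Real.sqrt 3 * I : ℂ) = ((-1 : ℝ) : ℂ) + (Real.sqrt 3 : ℝ) * I by
    push_cast; ring, norm_add_mul_I, Real.sq_sqrt (by norm_num : (0 : ℝ) ≤ 3)]
  norm_num

theorem sq_norm_omega_sub_one : ‖omega - 1‖ ^ 2 = 3 := by
  rw [omega, show (-1 + Real.sqrt 3 * I : ℂ) / 2 - 1 = ((-3 / 2 : ℝ) : ℂ) + (Real.sqrt 3 / 2 : ℝ) * I by
    push_cast; ring, norm_add_mul_I, Real.sq_sqrt (by positivity)]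
  norm_num [div_pow]

theorem omega_ne_one : omega ≠ 1 := by
  intro h
  simpa [h] using sq_norm_omega_sub_one

def cayley (lam : ℂ) : ℂ := (I - lam) / (I + lam)

theorem cayley_sq (lam : ℂ) : cayley lam ^ 2 = ((lam - I) / (lam + I)) ^ 2 := by
  rw [cayley, ← neg_sub, neg_div, neg_sq, add_comm]

theorem cayley_zero : cayley 0 = 1 := by
  simp [cayley, I_ne_zero]

theorem hasDerivAt_cayley {lam : ℂ} (hlam : I + lam ≠ 0) :
    HasDerivAt cayley (-2 * I / (I + lam) ^ 2) lam := by
  have h := ((hasDerivAt_id lam).const_sub I).div ((hasDerivAt_id lam).const_add I) hlam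
  refine h.congr_deriv ?_
  simp only [id]
  ring

theorem hasDerivAt_cayley_zero : HasDerivAt cayley (2 * I) 0 := by
  refine (hasDerivAt_cayley (by simp [I_ne_zero])).congr_deriv ?_
  rw [add_zero, I_sq]
  ring

def cubeRootBranch (lam : ℂ) : ℂ := omega * cayley lam ^ ((2 : ℂ) / 3)

theorem cubeRootBranch_pow_three (lam : ℂ) :
    cubeRootBranch lam ^ 3 = ((lam - I) / (lam + I)) ^ 2 := by
  rw [cubeRootBranch, mul_pow, omega_pow_three, one_mul, ← cayley_sq]
  exact_mod_cast cpow_div_pow (cayley lam) 2 (k := 3) (by norm_num)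

theorem cubeRootBranch_zero : cubeRootBranch 0 = omega := by
  rw [cubeRootBranch, cayley_zero, one_cpow, mul_one]

theorem hasDerivAt_cubeRootBranch_zero :
    HasDerivAt cubeRootBranch (omega * (4 / 3 * I)) 0 := by
  have h := (hasDerivAt_cayley_zero.cpow_const (c := (2 : ℂ) / 3)
    (by rw [cayley_zero]; exact one_mem_slitPlane)).const_mul omega
  refine h.congr_deriv ?_
  rw [cayley_zero, one_cpow]
  ring

def outerMap (w : ℂ) : ℂ := ((1 - w) - (Real.sqrt 3 : ℂ) * I * (1 + w)) / (2 * (w - 1))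

theorem outerMap_omega : outerMap omega = -1 := by
  have h : 2 * (omega - 1) ≠ 0 := mul_ne_zero two_ne_zero (sub_ne_zero.mpr omega_ne_one)
  rw [outerMap, div_eq_iff h, omega]
  ring_nf
  rw [I_sq, sqrt_three_sq]
  ring

theorem hasDerivAt_outerMap {w : ℂ} (hw : w ≠ 1) :
    HasDerivAt outerMap (Real.sqrt 3 * I / (w - 1) ^ 2) w := by
  have hw' : w - 1 ≠ 0 := sub_ne_zero.mpr hw
  have h := (((hasDerivAt_id w).const_sub 1).sub (((hasDerivAt_id w).const_add 1).const_mul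
    ((Real.sqrt 3 : ℂ) * I))).div (((hasDerivAt_id w).sub_const 1).const_mul 2)
    (mul_ne_zero two_ne_zero hw')
  refine h.congr_deriv ?_
  simp only [id, Pi.sub_apply]
  field_simp
  ring

end HalfDisc

open HalfDisc in
/-- The conformal map `Φ_Ω` of the exterior of the unit half-disc onto the exterior of
the unit disc, `Φ_Ω(λ) = [(1 - w) - √3 i (1 + w)] / (2(w - 1))` with `w = ((λ-i)/(λ+i))^{2/3}`
(suitable branch of the 2/3 power), satisfies `|Φ_Ω(0)| = 1` and
`|Φ_Ω'(0)| / |Φ_Ω(0)| = 4/(3√3)`; hence the normal derivative of the Green's function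
`g_Ω = log |Φ_Ω|` at `0` equals `4/(3√3)`. -/
theorem halfdisc_green_normal_derivative :
    ∃ w : ℂ → ℂ, (∀ lam : ℂ, (w lam) ^ 3 = ((lam - I) / (lam + I)) ^ 2) ∧
      ∀ Φ : ℂ → ℂ,
        (Φ = fun lam =>
          ((1 - w lam) - (Real.sqrt 3 : ℂ) * I * (1 + w lam)) / (2 * (w lam - 1))) →
        ‖Φ 0‖ = 1 ∧
        ∃ d : ℂ, HasDerivAt Φ d 0 ∧
          ‖d‖ / ‖Φ 0‖ = 4 / (3 * Real.sqrt 3) := by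
  refine ⟨cubeRootBranch, cubeRootBranch_pow_three, fun Φ hΦ => ?_⟩
  replace hΦ : Φ = outerMap ∘ cubeRootBranch := hΦ
  have hΦ0 : ‖Φ 0‖ = 1 := by simp [hΦ, cubeRootBranch_zero, outerMap_omega]
  have hderiv := (cubeRootBranch_zero ▸ hasDerivAt_outerMap omega_ne_one).comp 0
    hasDerivAt_cubeRootBranch_zero
  refine ⟨hΦ0, _, hΦ ▸ hderiv, ?_⟩
  rw [hΦ0, div_one, cubeRootBranch_zero]
  simp only [norm_mul, norm_div, norm_pow, sq_norm_omega_sub_one, norm_omega, norm_real, norm_I,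
    Real.norm_eq_abs, abs_of_pos (Real.sqrt_pos.mpr three_pos), norm_ofNat]
  field_simp
  exact Real.sq_sqrt (by norm_num)
end
end
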